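/- Let f ∈ K[x₁,x₂,x₃] be irreducible with positive degree in x₃, defining a surface that is not the plane x₃ = 0, and let p₁,p₂ ∈ K(x₃) with f(p₁(x₃),p₂(x₃),0) = 0. Then the polynomial g(x₁,x₂,x₃,t₂) = numer(f(p₁(x₃)+t₂x₁, p₂(x₃)+t₂x₂, t₂)) is not of the form λ·t₂^r with λ ∈ K∖{0} and r ∈ ℕ. (Proof uses: since deg_{x₃} f > 0 there is a zero (a₁,a₂,a₃) of f with a₃ ≠ 0, and substituting x_j⁰ = (a_j - p_j(x₃))/a₃ gives g(x₁⁰,x₂⁰,x₃,a₃) = 0, contradicting g = λ·a₃^r ≠ 0.) -/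

import Mathlib

/-!
Since `f` has positive degree in `x₃` and, being irreducible and not a multiple of `x₃`, is not
divisible by `x₃`, it has a zero `a` with `a₃ ≠ 0`: specialise `x₁, x₂` so that both the constant
and the leading coefficient of `f` in `x₃` survive, and take a root of the resulting univariate
polynomial. Substituting `x₁ = (a₁ - p₁)/a₃`, `x₂ = (a₂ - p₂)/a₃`, `t₂ = a₃` turns `g` into
`d · f(a) = 0`, whereas `λ t₂ʳ` becomes `λ a₃ʳ ≠ 0`.
-/

open MvPolynomial

theorem Polynomial.exists_isRoot_ne_zero {K : Type*} [Field K] [IsAlgClosed K]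
    {P : Polynomial K} (hdeg : 0 < P.degree) (h0 : P.coeff 0 ≠ 0) : ∃ t, P.IsRoot t ∧ t ≠ 0 := by
  obtain ⟨t, ht⟩ := IsAlgClosed.exists_root P hdeg.ne'
  refine ⟨t, ht, ?_⟩
  rintro rfl
  exact h0 (by rwa [Polynomial.coeff_zero_eq_eval_zero])

namespace MvPolynomial

section Field

variable {σ K : Type*} [Field K]

theorem eq_C_mul_X_of_irreducible_of_X_dvd {f : MvPolynomial σ K} (hf : Irreducible f) {i : σ}
    (hX : X i ∣ f) : ∃ u, f = C u * X i := by
  obtain ⟨q, rfl⟩ := hX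
  have hq : IsUnit q := (hf.isUnit_or_isUnit rfl).resolve_left (X_prime (i := i)).not_isUnit
  obtain ⟨u, -, rfl⟩ := isUnit_iff_eq_C_of_isReduced.mp hq
  exact ⟨u, mul_comm _ _⟩

theorem exists_eval_ne_zero [Infinite K] {p : MvPolynomial σ K} (hp : p ≠ 0) :
    ∃ x, eval x p ≠ 0 := by
  by_contra! h
  exact hp (funext fun x => by simp [h x])

end Field

section AlgClosed

variable {K : Type*} [Field K] [IsAlgClosed K] {n : ℕ}

theorem exists_eval_eq_zero_and_ne_zero_of_not_X_zero_dvd {f : MvPolynomial (Fin (n + 1)) K}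
    (hdeg : 0 < degreeOf 0 f) (hX : ¬ X 0 ∣ f) : ∃ a, eval a f = 0 ∧ a 0 ≠ 0 := by
  set F := finSuccEquiv K n f
  have hF : 0 < F.degree := by
    rw [← Polynomial.natDegree_pos_iff_degree_pos, natDegree_finSuccEquiv]
    exact hdeg
  have hF0 : F.coeff 0 ≠ 0 := fun h => hX <| by
    rwa [← map_dvd_iff (finSuccEquiv K n), finSuccEquiv_X_zero, Polynomial.X_dvd_iff]
  obtain ⟨b, hb⟩ := exists_eval_ne_zero (mul_ne_zero hF0
    (Polynomial.leadingCoeff_ne_zero.mpr (Polynomial.ne_zero_of_degree_gt hF)))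
  rw [map_mul] at hb
  obtain ⟨t, ht, ht0⟩ := Polynomial.exists_isRoot_ne_zero (P := F.map (eval b))
    (by rwa [Polynomial.degree_map_eq_of_leadingCoeff_ne_zero _ (right_ne_zero_of_mul hb)])
    (by rw [Polynomial.coeff_map]; exact left_ne_zero_of_mul hb)
  exact ⟨Fin.cons t b, by rw [eval_eq_eval_mv_eval']; exact ht, ht0⟩

theorem exists_eval_eq_zero_and_ne_zero_of_not_X_dvd {f : MvPolynomial (Fin (n + 1)) K}
    (i : Fin (n + 1)) (hdeg : 0 < degreeOf i f) (hX : ¬ X i ∣ f) :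
    ∃ a, eval a f = 0 ∧ a i ≠ 0 := by
  let e := renameEquiv K (Equiv.swap i 0)
  have he : e (X i) = X 0 := by simp [e]
  obtain ⟨a, ha, ha0⟩ := exists_eval_eq_zero_and_ne_zero_of_not_X_zero_dvd (f := e f)
    (by rwa [← Equiv.swap_apply_left i 0, renameEquiv_apply,
      degreeOf_rename_of_injective (Equiv.injective _)])
    (by rwa [← he, map_dvd_iff])
  exact ⟨a ∘ Equiv.swap i 0, by rwa [← eval_rename], by simpa⟩

end AlgClosed

theorem eval_aeval_eq_algebraMap {σ τ R A : Type*} [CommRing R] [CommRing A] [Algebra R A]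
    {f : MvPolynomial σ R} {w : σ → MvPolynomial τ A} {v : τ → A} {a : σ → R}
    (h : ∀ i, eval v (w i) = algebraMap R A (a i)) :
    eval v (aeval w f) = algebraMap R A (eval a f) := by
  calc eval v (aeval w f) = aeval (fun i => eval v (w i)) f :=
        comp_aeval_apply (f := w) ((aeval v).restrictScalars R) f
    _ = aeval (algebraMap R A ∘ a) f := by simp only [h]; rfl
    _ = algebraMap R A (eval a f) := aeval_algebraMap_apply ..

end MvPolynomial

theorem numerator_not_monomial_in_t2_general
    (K : Type*) [Field K] [IsAlgClosed K]
    (f : MvPolynomial (Fin 3) K) (hirr : Irreducible f)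
    (hdeg : 0 < MvPolynomial.degreeOf 2 f)
    (hplane : ∀ u : K, f ≠ MvPolynomial.C u * MvPolynomial.X 2)
    (p₁ p₂ : RatFunc K)
    (d : RatFunc K)
    (g : MvPolynomial (Fin 3) (RatFunc K))
    (hg : g = MvPolynomial.C d *
      MvPolynomial.aeval
        ![MvPolynomial.C p₁ + MvPolynomial.X 2 * MvPolynomial.X 0,
          MvPolynomial.C p₂ + MvPolynomial.X 2 * MvPolynomial.X 1,
          MvPolynomial.X 2] f) :
    ∀ (lam : K) (r : ℕ), lam ≠ 0 →
      g ≠ MvPolynomial.C (algebraMap K (RatFunc K) lam) * (MvPolynomial.X 2) ^ r := by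
  intro lam r hlam hgEq
  have hX : ¬ X 2 ∣ f := fun h => (eq_C_mul_X_of_irreducible_of_X_dvd hirr h).elim hplane
  obtain ⟨a, ha, ha2⟩ := exists_eval_eq_zero_and_ne_zero_of_not_X_dvd 2 hdeg hX
  set φ := algebraMap K (RatFunc K) with hφ
  have hφa2 : φ (a 2) ≠ 0 := (map_ne_zero φ).mpr ha2
  let v : Fin 3 → RatFunc K := ![(φ (a 0) - p₁) / φ (a 2), (φ (a 1) - p₂) / φ (a 2), φ (a 2)]
  have hg0 : eval v g = 0 := by
    rw [hg, map_mul, eval_aeval_eq_algebraMap (a := a), ha, map_zero, mul_zero]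
    intro i
    fin_cases i <;> simp only [v, Fin.reduceFinMk, Matrix.cons_val, map_add, map_mul, eval_C,
      eval_X, mul_div_cancel₀ _ hφa2, add_sub_cancel, ← hφ]
  have hmonomial : eval v g ≠ 0 := by
    simpa [hgEq, v] using mul_ne_zero ((map_ne_zero φ).mpr hlam) (pow_ne_zero r hφa2)
  exact hmonomial hg0

/-- If `f` is irreducible with positive degree in `x₃`, not defining the
plane `x₃ = 0`, and `f(p₁(x₃), p₂(x₃), 0) = 0`, then
`g = numer(f(p₁(x₃)+t₂x₁, p₂(x₃)+t₂x₂, t₂))` is not of the form `λ·t₂^r` with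
`λ ∈ K∖{0}` and `r ∈ ℕ`. -/
theorem numerator_not_monomial_in_t2
    (K : Type*) [Field K] [CharZero K] [IsAlgClosed K]
    (f : MvPolynomial (Fin 3) K) (hirr : Irreducible f)
    (hdeg : 0 < MvPolynomial.degreeOf 2 f)
    (hplane : ∀ u : K, f ≠ MvPolynomial.C u * MvPolynomial.X 2)
    (p₁ p₂ : RatFunc K)
    (hcurve : MvPolynomial.aeval ![p₁, p₂, 0] f = 0)
    (d : RatFunc K) (hd : d ≠ 0)
    (g : MvPolynomial (Fin 3) (RatFunc K))
    (hg : g = MvPolynomial.C d *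
      MvPolynomial.aeval
        ![MvPolynomial.C p₁ + MvPolynomial.X 2 * MvPolynomial.X 0,
          MvPolynomial.C p₂ + MvPolynomial.X 2 * MvPolynomial.X 1,
          MvPolynomial.X 2] f) :
    ∀ (lam : K) (r : ℕ), lam ≠ 0 →
      g ≠ MvPolynomial.C (algebraMap K (RatFunc K) lam) * (MvPolynomial.X 2) ^ r :=
  numerator_not_monomial_in_t2_general K f hirr hdeg hplane p₁ p₂ d g hg
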